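/- arXiv:2409.01537 — 9 statements merged into one kernel-verified Lean document; each statement's English description precedes it below -/
import Mathlib

section
/- The function θ₁(z) = α₁ e^{-z} satisfies the ODE -c(θ - θ'') - 8θ² + 2(θ')² - 2θ'θ'' + 4θθ'' = 0 for all z ∈ ℝ and any constants α₁, c ∈ ℝ. -/
lemma dexp (α₁ : ℝ) : deriv (fun z : ℝ => α₁ * Real.exp (-z)) = fun z => -(α₁ * Real.exp (-z)) := by
  funext z
  have h : HasDerivAt (fun z : ℝ => α₁ * Real.exp (-z)) (-(α₁ * Real.exp (-z))) z := by
    have := ((Real.hasDerivAt_exp (-z)).comp z (hasDerivAt_neg z)).const_mul α₁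
    simpa using this.congr_deriv (by ring)
  exact h.deriv

theorem stmt0 (α₁ c : ℝ) (θ : ℝ → ℝ) (hθ : ∀ z, θ z = α₁ * Real.exp (-z)) :
    ∀ z : ℝ,
      -c * (θ z - deriv (deriv θ) z) - 8 * (θ z) ^ 2 + 2 * (deriv θ z) ^ 2
        - 2 * deriv θ z * deriv (deriv θ) z + 4 * θ z * deriv (deriv θ) z = 0 := by
  have hθ' : θ = fun z => α₁ * Real.exp (-z) := funext hθ
  intro z
  have h1 : deriv θ = fun z => -(α₁ * Real.exp (-z)) := by rw [hθ']; exact dexp α₁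
  have heq : (fun z : ℝ => -(α₁ * Real.exp (-z))) = fun z => (-α₁) * Real.exp (-z) := by
    funext z; ring
  have h2 : deriv (deriv θ) z = α₁ * Real.exp (-z) := by
    rw [h1, heq, dexp (-α₁)]; ring
  rw [hθ z, h2, h1]
  simp only
  ring
end

section
/- If cα₂ ≤ 0, the function θ₂(z) = -α₂ e^{2z} + (√(-3cα₂)/2) e^{z} satisfies the ODE -c(θ - θ'') - 8θ² + 2(θ')² - 2θ'θ'' + 4θθ'' = 0 for all z ∈ ℝ. -/
lemma aux_deriv (a b : ℝ) :
    deriv (fun z : ℝ => a * Real.exp (2 * z) + b * Real.exp z)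
      = fun z : ℝ => 2 * a * Real.exp (2 * z) + b * Real.exp z := by
  funext z
  have h1 : HasDerivAt (fun z : ℝ => a * Real.exp (2 * z)) (2 * a * Real.exp (2 * z)) z := by
    have := ((Real.hasDerivAt_exp (2 * z)).comp z ((hasDerivAt_id z).const_mul 2)).const_mul a
    simpa [mul_comm, mul_assoc, mul_left_comm] using this
  have h2 : HasDerivAt (fun z : ℝ => b * Real.exp z) (b * Real.exp z) z :=
    (Real.hasDerivAt_exp z).const_mul b
  exact (h1.add h2).deriv

theorem stmt1 (α₂ c : ℝ) (hc : c * α₂ ≤ 0) (θ : ℝ → ℝ)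
    (hθ : ∀ z, θ z = -α₂ * Real.exp (2 * z) + Real.sqrt (-3 * c * α₂) / 2 * Real.exp z) :
    ∀ z : ℝ,
      -c * (θ z - deriv (deriv θ) z) - 8 * (θ z) ^ 2 + 2 * (deriv θ z) ^ 2
        - 2 * deriv θ z * deriv (deriv θ) z + 4 * θ z * deriv (deriv θ) z = 0 := by
  set s : ℝ := Real.sqrt (-3 * c * α₂) with hs
  have hθ' : θ = fun z => -α₂ * Real.exp (2 * z) + s / 2 * Real.exp z := funext hθ
  have hs2 : s ^ 2 = -3 * c * α₂ := by
    rw [hs, Real.sq_sqrt]; nlinarith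
  intro z
  rw [hθ', aux_deriv, aux_deriv]
  simp only
  have he : Real.exp (2 * z) = Real.exp z * Real.exp z := by
    rw [two_mul, Real.exp_add]
  rw [he]
  linear_combination (-(Real.exp z * Real.exp z)) * hs2
end

section
/- For any smooth u, the identity D_t(½u² + ½u_x²) + D_x(-16u³/3 - 2uu_xu_{xx} + 2u_x³/3 + 4u²u_{xx} - uu_{tx}) = u·(u_t - u_{txx} - 16uu_x + 8u_xu_{xx} - 2u_{xx}² + 4uu_{xxx} - 2u_xu_{xxx}) holds identically; in particular on solutions the left side vanishes. -/
noncomputable def pdx (u : ℝ → ℝ → ℝ) : ℝ → ℝ → ℝ := fun x t => deriv (fun y => u y t) x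
noncomputable def pdt (u : ℝ → ℝ → ℝ) : ℝ → ℝ → ℝ := fun x t => deriv (fun s => u x s) t

noncomputable def Pv (v : ℝ × ℝ) (f : ℝ × ℝ → ℝ) : ℝ × ℝ → ℝ := fun p => fderiv ℝ f p v

lemma Pv_contDiff (v : ℝ × ℝ) {f : ℝ × ℝ → ℝ} (hf : ContDiff ℝ (⊤ : ℕ∞) f) :
    ContDiff ℝ (⊤ : ℕ∞) (Pv v f) :=
  (hf.fderiv_right (by simp)).clm_apply contDiff_const

lemma hasDerivAt_sect_x {f : ℝ × ℝ → ℝ} (hf : ContDiff ℝ (⊤ : ℕ∞) f) (x t : ℝ) :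
    HasDerivAt (fun y => f (y, t)) (Pv (1, 0) f (x, t)) x := by
  have h := (hf.differentiable (by simp) (x, t)).hasFDerivAt
  have hg : HasDerivAt (fun y : ℝ => (y, t)) ((1 : ℝ), (0 : ℝ)) x :=
    (hasDerivAt_id x).prodMk (hasDerivAt_const x t)
  exact h.comp_hasDerivAt x hg

lemma hasDerivAt_sect_t {f : ℝ × ℝ → ℝ} (hf : ContDiff ℝ (⊤ : ℕ∞) f) (x t : ℝ) :
    HasDerivAt (fun s => f (x, s)) (Pv (0, 1) f (x, t)) t := by
  have h := (hf.differentiable (by simp) (x, t)).hasFDerivAt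
  have hg : HasDerivAt (fun s : ℝ => (x, s)) ((0 : ℝ), (1 : ℝ)) t :=
    (hasDerivAt_const t x).prodMk (hasDerivAt_id t)
  exact h.comp_hasDerivAt t hg

lemma uncurry_pdx {u : ℝ → ℝ → ℝ} (hu : ContDiff ℝ (⊤ : ℕ∞) (Function.uncurry u)) :
    Function.uncurry (pdx u) = Pv (1, 0) (Function.uncurry u) := by
  funext p
  exact (hasDerivAt_sect_x hu p.1 p.2).deriv

lemma uncurry_pdt {u : ℝ → ℝ → ℝ} (hu : ContDiff ℝ (⊤ : ℕ∞) (Function.uncurry u)) :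
    Function.uncurry (pdt u) = Pv (0, 1) (Function.uncurry u) := by
  funext p
  exact (hasDerivAt_sect_t hu p.1 p.2).deriv

lemma pdx_contDiff {u : ℝ → ℝ → ℝ} (hu : ContDiff ℝ (⊤ : ℕ∞) (Function.uncurry u)) :
    ContDiff ℝ (⊤ : ℕ∞) (Function.uncurry (pdx u)) := by
  rw [uncurry_pdx hu]; exact Pv_contDiff _ hu

lemma pdt_contDiff {u : ℝ → ℝ → ℝ} (hu : ContDiff ℝ (⊤ : ℕ∞) (Function.uncurry u)) :
    ContDiff ℝ (⊤ : ℕ∞) (Function.uncurry (pdt u)) := by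
  rw [uncurry_pdt hu]; exact Pv_contDiff _ hu

lemma hasDerivAt_pdx {u : ℝ → ℝ → ℝ} (hu : ContDiff ℝ (⊤ : ℕ∞) (Function.uncurry u)) (x t : ℝ) :
    HasDerivAt (fun y => u y t) (pdx u x t) x := by
  have h := hasDerivAt_sect_x hu x t
  have h2 : pdx u x t = Pv (1, 0) (Function.uncurry u) (x, t) := h.deriv
  rw [h2]; exact h

lemma hasDerivAt_pdt {u : ℝ → ℝ → ℝ} (hu : ContDiff ℝ (⊤ : ℕ∞) (Function.uncurry u)) (x t : ℝ) :
    HasDerivAt (fun s => u x s) (pdt u x t) t := by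
  have h := hasDerivAt_sect_t hu x t
  have h2 : pdt u x t = Pv (0, 1) (Function.uncurry u) (x, t) := h.deriv
  rw [h2]; exact h

lemma fderiv_Pv {f : ℝ × ℝ → ℝ} (hf : ContDiff ℝ (⊤ : ℕ∞) f) (v p w : ℝ × ℝ) :
    fderiv ℝ (Pv v f) p w = fderiv ℝ (fderiv ℝ f) p w v := by
  have h2 : HasFDerivAt (fderiv ℝ f) (fderiv ℝ (fderiv ℝ f) p) p :=
    (((hf.fderiv_right (m := 1) (WithTop.coe_le_coe.mpr le_top)).differentiable one_ne_zero) p).hasFDerivAt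
  have h3 : HasFDerivAt (Pv v f)
      ((ContinuousLinearMap.apply ℝ ℝ v).comp (fderiv ℝ (fderiv ℝ f) p)) p :=
    (ContinuousLinearMap.apply ℝ ℝ v).hasFDerivAt.comp p h2
  rw [h3.fderiv]; rfl

lemma clairaut {u : ℝ → ℝ → ℝ} (hu : ContDiff ℝ (⊤ : ℕ∞) (Function.uncurry u)) (x t : ℝ) :
    pdt (pdx u) x t = pdx (pdt u) x t := by
  have hsx := pdx_contDiff hu
  have hst := pdt_contDiff hu
  have hdiff : ∀ y, HasFDerivAt (Function.uncurry u) (fderiv ℝ (Function.uncurry u) y) y :=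
    fun y => (hu.differentiable (by simp) y).hasFDerivAt
  have hsnd : HasFDerivAt (fderiv ℝ (Function.uncurry u))
      (fderiv ℝ (fderiv ℝ (Function.uncurry u)) (x, t)) (x, t) :=
    (((hu.fderiv_right (m := 1) (WithTop.coe_le_coe.mpr le_top)).differentiable one_ne_zero) (x, t)).hasFDerivAt
  have e1 : pdt (pdx u) x t
      = fderiv ℝ (fderiv ℝ (Function.uncurry u)) (x, t) (0, 1) (1, 0) := by
    have h : pdt (pdx u) x t = Pv (0, 1) (Function.uncurry (pdx u)) (x, t) :=
      (hasDerivAt_sect_t hsx x t).deriv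
    rw [h, uncurry_pdx hu]
    exact fderiv_Pv hu (1, 0) (x, t) (0, 1)
  have e2 : pdx (pdt u) x t
      = fderiv ℝ (fderiv ℝ (Function.uncurry u)) (x, t) (1, 0) (0, 1) := by
    have h : pdx (pdt u) x t = Pv (1, 0) (Function.uncurry (pdt u)) (x, t) :=
      (hasDerivAt_sect_x hst x t).deriv
    rw [h, uncurry_pdt hu]
    exact fderiv_Pv hu (0, 1) (x, t) (1, 0)
  rw [e1, e2]
  exact second_derivative_symmetric hdiff hsnd _ _

theorem stmt5 (u : ℝ → ℝ → ℝ) (hu : ContDiff ℝ (⊤ : ℕ∞) (Function.uncurry u)) :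
    ∀ x t : ℝ,
      pdt (fun x t => (1 / 2) * (u x t) ^ 2 + (1 / 2) * (pdx u x t) ^ 2) x t
        + pdx (fun x t => -16 * (u x t) ^ 3 / 3 - 2 * u x t * pdx u x t * pdx (pdx u) x t
            + 2 * (pdx u x t) ^ 3 / 3 + 4 * (u x t) ^ 2 * pdx (pdx u) x t
            - u x t * pdx (pdt u) x t) x t
      = u x t * (pdt u x t - pdx (pdx (pdt u)) x t
          - 16 * u x t * pdx u x t + 8 * pdx u x t * pdx (pdx u) x t
          - 2 * (pdx (pdx u) x t) ^ 2 + 4 * u x t * pdx (pdx (pdx u)) x t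
          - 2 * pdx u x t * pdx (pdx (pdx u)) x t) := by
  intro x t
  have hux := pdx_contDiff hu
  have huxx := pdx_contDiff hux
  have hut := pdt_contDiff hu
  have hutx := pdx_contDiff hut
  have d1 : HasDerivAt (fun y => u y t) (pdx u x t) x := hasDerivAt_pdx hu x t
  have d2 : HasDerivAt (fun y => pdx u y t) (pdx (pdx u) x t) x := hasDerivAt_pdx hux x t
  have d3 : HasDerivAt (fun y => pdx (pdx u) y t) (pdx (pdx (pdx u)) x t) x :=
    hasDerivAt_pdx huxx x t
  have d4 : HasDerivAt (fun y => pdx (pdt u) y t) (pdx (pdx (pdt u)) x t) x :=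
    hasDerivAt_pdx hutx x t
  have e1 : HasDerivAt (fun s => u x s) (pdt u x t) t := hasDerivAt_pdt hu x t
  have e2 : HasDerivAt (fun s => pdx u x s) (pdt (pdx u) x t) t := hasDerivAt_pdt hux x t
  have key1 : deriv (fun s => 1 / 2 * u x s ^ 2 + 1 / 2 * pdx u x s ^ 2) t
      = u x t * pdt u x t + pdx u x t * pdt (pdx u) x t := by
    rw [(show HasDerivAt (fun s => 1 / 2 * u x s ^ 2 + 1 / 2 * pdx u x s ^ 2) _ t from
      (((e1.pow 2).const_mul ((1:ℝ)/2)).add ((e2.pow 2).const_mul ((1:ℝ)/2)))).deriv]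
    push_cast
    ring
  have key2 : deriv (fun y => -16 * u y t ^ 3 / 3 - 2 * u y t * pdx u y t * pdx (pdx u) y t
        + 2 * pdx u y t ^ 3 / 3 + 4 * u y t ^ 2 * pdx (pdx u) y t
        - u y t * pdx (pdt u) y t) x
      = -16 * u x t ^ 2 * pdx u x t
        - 2 * pdx u x t ^ 2 * pdx (pdx u) x t - 2 * u x t * pdx (pdx u) x t ^ 2
          - 2 * u x t * pdx u x t * pdx (pdx (pdx u)) x t
        + 2 * pdx u x t ^ 2 * pdx (pdx u) x t
        + 8 * u x t * pdx u x t * pdx (pdx u) x t + 4 * u x t ^ 2 * pdx (pdx (pdx u)) x t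
        - pdx u x t * pdx (pdt u) x t - u x t * pdx (pdx (pdt u)) x t := by
    have T1 := ((d1.pow 3).const_mul ((-16:ℝ))).div_const 3
    have T2 := ((d1.const_mul (2:ℝ)).mul d2).mul d3
    have T3 := ((d2.pow 3).const_mul ((2:ℝ))).div_const 3
    have T4 := ((d1.pow 2).const_mul ((4:ℝ))).mul d3
    have T5 := d1.mul d4
    rw [(show HasDerivAt (fun y => -16 * u y t ^ 3 / 3 - 2 * u y t * pdx u y t * pdx (pdx u) y t
        + 2 * pdx u y t ^ 3 / 3 + 4 * u y t ^ 2 * pdx (pdx u) y t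
        - u y t * pdx (pdt u) y t) _ x from (((T1.sub T2).add T3).add T4).sub T5).deriv]
    simp only [Pi.mul_apply, Pi.pow_apply]
    push_cast
    ring
  show deriv (fun s => 1 / 2 * u x s ^ 2 + 1 / 2 * pdx u x s ^ 2) t
      + deriv (fun y => -16 * u y t ^ 3 / 3 - 2 * u y t * pdx u y t * pdx (pdx u) y t
        + 2 * pdx u y t ^ 3 / 3 + 4 * u y t ^ 2 * pdx (pdx u) y t
        - u y t * pdx (pdt u) y t) x = _
  rw [key1, key2, clairaut hu x t]
  ring
end

section
/- For each ε ∈ ℝ, if u = f(x,t) is a smooth solution of u_t - u_{txx} = 16uu_x - 8u_xu_{xx} + 2u_{xx}² - 4uu_{xxx} + 2u_xu_{xxx}, then ū(x,t) = f(x,t) - ε e^{2x} is also a solution. -/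
def IsSol (u : ℝ → ℝ → ℝ) : Prop :=
  ∀ x t : ℝ,
    pdt u x t - pdx (pdx (pdt u)) x t
      = 16 * u x t * pdx u x t - 8 * pdx u x t * pdx (pdx u) x t
        + 2 * (pdx (pdx u) x t) ^ 2 - 4 * u x t * pdx (pdx (pdx u)) x t
        + 2 * pdx u x t * pdx (pdx (pdx u)) x t

lemma expDeriv (ε c : ℝ) : ∀ y : ℝ, HasDerivAt (fun y => ε * Real.exp (c * y)) (c * ε * Real.exp (c * y)) y := by
  intro y
  have h : HasDerivAt (fun y : ℝ => c * y) c y := by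
    simpa using (hasDerivAt_id y).const_mul c
  have := (h.exp).const_mul ε
  rw [show c * ε * Real.exp (c * y) = ε * (Real.exp (c * y) * c) by ring]
  exact this

theorem stmt7 (ε : ℝ) (f : ℝ → ℝ → ℝ) (hf : ContDiff ℝ (⊤ : ℕ∞) (Function.uncurry f))
    (hsol : IsSol f) :
    IsSol (fun x t => f x t - ε * Real.exp (2 * x)) := by
  -- slices are smooth
  have hslice : ∀ t : ℝ, ContDiff ℝ (⊤ : ℕ∞) (fun y => f y t) := fun t =>
    hf.comp (contDiff_id.prodMk contDiff_const)
  have hslice1 : ∀ t : ℝ, ContDiff ℝ (⊤ : ℕ∞) (fun y => pdx f y t) := by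
    intro t
    have : (fun y => pdx f y t) = deriv (fun y => f y t) := rfl
    rw [this]
    exact ((contDiff_infty_iff_deriv.mp ((hslice t).of_le (by simp))).2)
  have hslice2 : ∀ t : ℝ, ContDiff ℝ (⊤ : ℕ∞) (fun y => pdx (pdx f) y t) := by
    intro t
    have : (fun y => pdx (pdx f) y t) = deriv (fun y => pdx f y t) := rfl
    rw [this]
    exact ((contDiff_infty_iff_deriv.mp (hslice1 t)).2)
  set g : ℝ → ℝ → ℝ := fun x t => f x t - ε * Real.exp (2 * x) with hg
  -- first x-derivative
  have h1 : ∀ x t : ℝ, pdx g x t = pdx f x t - 2 * ε * Real.exp (2 * x) := by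
    intro x t
    have hd : HasDerivAt (fun y => g y t) (pdx f x t - 2 * ε * Real.exp (2 * x)) x := by
      exact ((hslice t).differentiable (by simp) x).hasDerivAt.sub (expDeriv ε 2 x)
    exact hd.deriv
  have h1fun : pdx g = fun x t => pdx f x t - 2 * ε * Real.exp (2 * x) := by
    funext x t; exact h1 x t
  -- second x-derivative
  have h2 : ∀ x t : ℝ, pdx (pdx g) x t = pdx (pdx f) x t - 4 * ε * Real.exp (2 * x) := by
    intro x t
    rw [h1fun]
    have hd : HasDerivAt (fun y => pdx f y t - 2 * ε * Real.exp (2 * y))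
        (pdx (pdx f) x t - 2 * (2 * ε) * Real.exp (2 * x)) x :=
      ((hslice1 t).differentiable (by simp) x).hasDerivAt.sub (expDeriv (2 * ε) 2 x)
    have := hd.deriv
    show deriv (fun y => pdx f y t - 2 * ε * Real.exp (2 * y)) x = _
    rw [this]; ring
  have h2fun : pdx (pdx g) = fun x t => pdx (pdx f) x t - 4 * ε * Real.exp (2 * x) := by
    funext x t; exact h2 x t
  -- third x-derivative
  have h3 : ∀ x t : ℝ, pdx (pdx (pdx g)) x t = pdx (pdx (pdx f)) x t - 8 * ε * Real.exp (2 * x) := by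
    intro x t
    rw [h2fun]
    have hd : HasDerivAt (fun y => pdx (pdx f) y t - 4 * ε * Real.exp (2 * y))
        (pdx (pdx (pdx f)) x t - 2 * (4 * ε) * Real.exp (2 * x)) x :=
      ((hslice2 t).differentiable (by simp) x).hasDerivAt.sub (expDeriv (4 * ε) 2 x)
    have := hd.deriv
    show deriv (fun y => pdx (pdx f) y t - 4 * ε * Real.exp (2 * y)) x = _
    rw [this]; ring
  -- time derivative
  have ht : pdt g = pdt f := by
    funext x t
    show deriv (fun s => f x s - ε * Real.exp (2 * x)) t = deriv (fun s => f x s) t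
    exact deriv_sub_const _
  intro x t
  rw [show g x t = f x t - ε * Real.exp (2 * x) from rfl, h1, h2 x t, h3, ht]
  linear_combination hsol x t
end

section
/- For each ε ∈ ℝ, if u = f(x,t) is a smooth solution of u_t - u_{txx} = 16uu_x - 8u_xu_{xx} + 2u_{xx}² - 4uu_{xxx} + 2u_xu_{xxx}, then ū(x,t) = e^{ε} f(x, e^{ε} t) is also a solution. -/
lemma pdx_scale (c a : ℝ) (g : ℝ → ℝ → ℝ) :
    pdx (fun x t => a * g x (c * t)) = fun x t => a * pdx g x (c * t) := by
  funext x t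
  unfold pdx
  exact deriv_const_mul_field a

theorem stmt8 (ε : ℝ) (f : ℝ → ℝ → ℝ) (hf : ContDiff ℝ (⊤ : ℕ∞) (Function.uncurry f))
    (hsol : IsSol f) :
    IsSol (fun x t => Real.exp ε * f x (Real.exp ε * t)) := by
  set c := Real.exp ε with hc
  have hft : ∀ x t : ℝ, DifferentiableAt ℝ (fun s => f x s) t := by
    intro x t
    have h1 : DifferentiableAt ℝ (Function.uncurry f) (x, t) :=
      (hf.differentiable (by simp)).differentiableAt
    have h2 : DifferentiableAt ℝ (fun s : ℝ => ((x, s) : ℝ × ℝ)) t :=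
      DifferentiableAt.prodMk (differentiableAt_const x) differentiableAt_id
    exact h1.comp t h2
  have hpdt : pdt (fun x t => c * f x (c * t)) = fun x t => c ^ 2 * pdt f x (c * t) := by
    funext x t
    unfold pdt
    have h1 : HasDerivAt (fun s => f x s) (pdt f x (c * t)) (c * t) :=
      (hft x (c * t)).hasDerivAt
    have h2 : HasDerivAt (fun s : ℝ => c * s) c t := by
      simpa using (hasDerivAt_id t).const_mul c
    have h3 : HasDerivAt (fun s => f x (c * s)) (pdt f x (c * t) * c) t := h1.comp t h2
    rw [deriv_const_mul_field, h3.deriv]; unfold pdt; ring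
  intro x t
  simp only [hpdt, pdx_scale c c f, pdx_scale c (c ^ 2) (pdt f),
    pdx_scale c c (pdx f), pdx_scale c (c ^ 2) (pdx (pdt f)),
    pdx_scale c c (pdx (pdx f))]
  linear_combination (c ^ 2) * hsol x (c * t)
end

section
/- For every constant a ∈ ℝ and β ≠ 0, the function u(x,t) = a t e^{-x} + e^{2x}/(5β) solves u_t - u_{txx} = 16uu_x - 8u_xu_{xx} + 2u_{xx}² - 4uu_{xxx} + 2u_xu_{xxx}. -/
lemma dexp_neg (x : ℝ) : HasDerivAt (fun y : ℝ => Real.exp (-y)) (-Real.exp (-x)) x := by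
  simpa [Function.comp_def] using (Real.hasDerivAt_exp (-x)).comp x (hasDerivAt_neg x)

lemma dexp_two (x : ℝ) : HasDerivAt (fun y : ℝ => Real.exp (2*y)) (2 * Real.exp (2*x)) x := by
  have := (Real.hasDerivAt_exp (2*x)).comp x ((hasDerivAt_id x).const_mul 2)
  simpa [Function.comp_def, mul_comm] using this

lemma dgen (c d x : ℝ) :
    deriv (fun y : ℝ => c * Real.exp (-y) + d * Real.exp (2*y)) x
      = c * -Real.exp (-x) + d * (2 * Real.exp (2*x)) :=
  (((dexp_neg x).const_mul c).add ((dexp_two x).const_mul d)).deriv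

lemma dgen1 (c x : ℝ) :
    deriv (fun y : ℝ => c * Real.exp (-y)) x = c * -Real.exp (-x) :=
  ((dexp_neg x).const_mul c).deriv

theorem stmt10 (a β : ℝ) (hβ : β ≠ 0) :
    IsSol (fun x t => a * t * Real.exp (-x) + Real.exp (2 * x) / (5 * β)) := by
  intro x t
  set u : ℝ → ℝ → ℝ := fun x t => a * t * Real.exp (-x) + Real.exp (2 * x) / (5 * β) with hu
  set K : ℝ := (5 * β)⁻¹ with hK
  -- t-derivatives
  have hT : ∀ y : ℝ, pdt u y t = a * Real.exp (-y) := by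
    intro y
    have h : HasDerivAt (fun s : ℝ => a * s * Real.exp (-y) + Real.exp (2*y) / (5*β))
        (a * Real.exp (-y)) t := by
      have := (((hasDerivAt_id t).const_mul a).mul_const (Real.exp (-y))).add_const
        (Real.exp (2*y) / (5*β))
      simpa using this
    exact h.deriv
  have hPT : (fun z => pdt u z t) = fun z => a * Real.exp (-z) := funext hT
  have hXT : ∀ y : ℝ, pdx (pdt u) y t = (-a) * Real.exp (-y) := by
    intro y
    show deriv (fun z => pdt u z t) y = _
    rw [hPT, dgen1 a y]; ring
  have hXXT : pdx (pdx (pdt u)) x t = a * Real.exp (-x) := by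
    show deriv (fun z => pdx (pdt u) z t) x = _
    rw [funext hXT, dgen1 (-a) x]; ring
  -- x-derivatives
  have h0 : (fun z => u z t) = fun z => (a*t) * Real.exp (-z) + K * Real.exp (2*z) := by
    funext z; rw [hu, hK]; ring
  have hX1 : ∀ y : ℝ, pdx u y t = (-(a*t)) * Real.exp (-y) + (2*K) * Real.exp (2*y) := by
    intro y
    show deriv (fun z => u z t) y = _
    rw [h0, dgen (a*t) K y]; ring
  have hX2 : ∀ y : ℝ, pdx (pdx u) y t = (a*t) * Real.exp (-y) + (4*K) * Real.exp (2*y) := by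
    intro y
    show deriv (fun z => pdx u z t) y = _
    rw [funext hX1, dgen (-(a*t)) (2*K) y]; ring
  have hX3 : ∀ y : ℝ, pdx (pdx (pdx u)) y t
      = (-(a*t)) * Real.exp (-y) + (8*K) * Real.exp (2*y) := by
    intro y
    show deriv (fun z => pdx (pdx u) z t) y = _
    rw [funext hX2, dgen (a*t) (4*K) y]; ring
  have hu0 : u x t = (a*t) * Real.exp (-x) + K * Real.exp (2*x) := congrFun h0 x
  rw [hT x, hXXT, hu0, hX1 x, hX2 x, hX3 x]
  ring
end

section
/- For α₁, c ∈ ℝ, the function u₁(x,t) = α₁ e^{ct - x} is a solution of u_t - u_{txx} = 16uu_x - 8u_xu_{xx} + 2u_{xx}² - 4uu_{xxx} + 2u_xu_{xxx}. -/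
lemma derivx (a c t x : ℝ) :
    deriv (fun y => a * Real.exp (c * t - y)) x = -(a * Real.exp (c * t - x)) := by
  have : (fun y => a * Real.exp (c * t - y)) = fun y => a * Real.exp (c * t - y) := rfl
  rw [deriv_const_mul _ (by fun_prop)]
  rw [show (fun y => Real.exp (c * t - y)) = Real.exp ∘ (fun y => c * t - y) from rfl]
  rw [deriv_comp _ (Real.differentiable_exp _) (by fun_prop)]
  rw [deriv_const_sub]; simp


lemma derivt (a c x t : ℝ) :
    deriv (fun s => a * Real.exp (c * s - x)) t = c * (a * Real.exp (c * t - x)) := by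
  rw [deriv_const_mul _ (by fun_prop)]
  rw [show (fun s => Real.exp (c * s - x)) = Real.exp ∘ (fun s => c * s - x) from rfl]
  rw [deriv_comp _ (Real.differentiable_exp _) (by fun_prop)]
  rw [deriv_sub_const, deriv_const_mul _ differentiable_id.differentiableAt]; simp
  ring

theorem stmt11 (α₁ c : ℝ) : IsSol (fun x t => α₁ * Real.exp (c * t - x)) := by
  intro x t
  have h1 : pdx (fun x t => α₁ * Real.exp (c * t - x)) = fun x t => -α₁ * Real.exp (c * t - x) := by
    funext x t; simp only [pdx, derivx]; ring
  have h2 : pdt (fun x t => α₁ * Real.exp (c * t - x)) = fun x t => c * α₁ * Real.exp (c * t - x) := by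
    funext x t; simp only [pdt, derivt]; ring
  have h3 : ∀ a : ℝ, pdx (fun x t => a * Real.exp (c * t - x)) = fun x t => -a * Real.exp (c * t - x) := by
    intro a; funext x t; simp only [pdx, derivx]; ring
  rw [h2, h1, h3, h3, h3, h3]
  ring
end

section
/- If c, α₂ ∈ ℝ satisfy cα₂ ≤ 0, then u₂(x,t) = -α₂ e^{2(x-ct)} + (√(-3cα₂)/2) e^{x-ct} is a solution of u_t - u_{txx} = 16uu_x - 8u_xu_{xx} + 2u_{xx}² - 4uu_{xxx} + 2u_xu_{xxx}. -/
lemma pdx_form (c P Q : ℝ) :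
    pdx (fun x t => P * Real.exp (2 * (x - c * t)) + Q * Real.exp (x - c * t))
      = fun x t => 2 * P * Real.exp (2 * (x - c * t)) + Q * Real.exp (x - c * t) := by
  funext x t
  have h1 : HasDerivAt (fun y : ℝ => P * Real.exp (2 * (y - c * t)))
      (2 * P * Real.exp (2 * (x - c * t))) x := by
    have := ((Real.hasDerivAt_exp (2 * (x - c * t))).comp x
      (((hasDerivAt_id x).sub_const (c * t)).const_mul 2)).const_mul P
    simpa [mul_comm, mul_assoc, mul_left_comm] using this
  have h2 : HasDerivAt (fun y : ℝ => Q * Real.exp (y - c * t))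
      (Q * Real.exp (x - c * t)) x := by
    have := ((Real.hasDerivAt_exp (x - c * t)).comp x
      ((hasDerivAt_id x).sub_const (c * t))).const_mul Q
    simpa [mul_comm, mul_assoc, mul_left_comm] using this
  simp only [pdx]
  exact (h1.add h2).deriv

lemma pdt_form (c P Q : ℝ) :
    pdt (fun x t => P * Real.exp (2 * (x - c * t)) + Q * Real.exp (x - c * t))
      = fun x t => (-2 * c * P) * Real.exp (2 * (x - c * t)) + (-c * Q) * Real.exp (x - c * t) := by
  funext x t
  have h1 : HasDerivAt (fun s : ℝ => P * Real.exp (2 * (x - c * s)))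
      ((-2 * c * P) * Real.exp (2 * (x - c * t))) t := by
    have := ((Real.hasDerivAt_exp (2 * (x - c * t))).comp t
      ((((hasDerivAt_id t).const_mul c).const_sub x).const_mul 2)).const_mul P
    refine this.congr_deriv ?_
    ring
  have h2 : HasDerivAt (fun s : ℝ => Q * Real.exp (x - c * s))
      ((-c * Q) * Real.exp (x - c * t)) t := by
    have := ((Real.hasDerivAt_exp (x - c * t)).comp t
      (((hasDerivAt_id t).const_mul c).const_sub x)).const_mul Q
    refine this.congr_deriv ?_
    ring
  simp only [pdt]
  exact (h1.add h2).deriv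

theorem stmt12 (c α₂ : ℝ) (hc : c * α₂ ≤ 0) :
    IsSol (fun x t =>
      -α₂ * Real.exp (2 * (x - c * t)) + Real.sqrt (-3 * c * α₂) / 2 * Real.exp (x - c * t)) := by
  intro x t
  rw [pdt_form c (-α₂) (Real.sqrt (-3 * c * α₂) / 2),
      pdx_form, pdx_form, pdx_form, pdx_form, pdx_form]
  have hs : Real.sqrt (-3 * c * α₂) ^ 2 = -3 * c * α₂ :=
    Real.sq_sqrt (by nlinarith)
  have he : Real.exp (2 * (x - c * t)) = Real.exp (x - c * t) ^ 2 := by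
    rw [two_mul, Real.exp_add, sq]
  simp only [he]
  linear_combination (-2 * Real.exp (x - c * t) ^ 2) * hs
end

section
/- For every real s < 5/2, the integral ∫_ℝ (1+k²)^s / ((k³+k²)² + (2k²+2)²) dk is finite, and it diverges for s ≥ 5/2. Consequently the pseudo-peakon Θ belongs to the Sobolev space H^s(ℝ) if and only if s < 5/2; in particular Θ ∈ H^{3/2+ε}(ℝ) for every ε ∈ [0,1). -/
open MeasureTheory Set FiniteDimensional

private lemma denomPos (k : ℝ) : 0 < (k ^ 3 + k ^ 2) ^ 2 + (2 * k ^ 2 + 2) ^ 2 := by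
  nlinarith [sq_nonneg (k ^ 3 + k ^ 2), sq_nonneg k]

private lemma denomLB (k : ℝ) :
    (1 / 2 : ℝ) * (1 + k ^ 2) ^ 3 ≤ (k ^ 3 + k ^ 2) ^ 2 + (2 * k ^ 2 + 2) ^ 2 := by
  nlinarith [sq_nonneg (k ^ 2 * (k + 2)), sq_nonneg k, sq_nonneg (k ^ 2)]

private lemma denomUB (k : ℝ) :
    (k ^ 3 + k ^ 2) ^ 2 + (2 * k ^ 2 + 2) ^ 2 ≤ 8 * (1 + k ^ 2) ^ 3 := by
  nlinarith [sq_nonneg (k ^ 2 * (k - 1)), sq_nonneg k, sq_nonneg (k ^ 2)]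

private lemma keyEq (k s : ℝ) : (1 + k ^ 2 : ℝ) ^ s = (1 + k ^ 2) ^ (s - 3) * (1 + k ^ 2) ^ (3 : ℕ) := by
  have hA : (0 : ℝ) < 1 + k ^ 2 := by positivity
  rw [← Real.rpow_natCast (1 + k ^ 2) 3, ← Real.rpow_add hA]
  norm_num

private lemma main_iff (s : ℝ) :
    Integrable (fun k : ℝ =>
      (1 + k ^ 2) ^ s / ((k ^ 3 + k ^ 2) ^ 2 + (2 * k ^ 2 + 2) ^ 2)) ↔ s < 5 / 2 := by
  constructor
  · intro hI
    by_contra h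
    push_neg at h
    have h16 : IntegrableOn (fun k : ℝ =>
        16 * ((1 + k ^ 2) ^ s / ((k ^ 3 + k ^ 2) ^ 2 + (2 * k ^ 2 + 2) ^ 2))) (Ioi 1) :=
      (hI.const_mul 16).integrableOn
    have hbound : ∀ k : ℝ, 1 < k →
        k ^ (-1 : ℝ) ≤ 16 * ((1 + k ^ 2) ^ s / ((k ^ 3 + k ^ 2) ^ 2 + (2 * k ^ 2 + 2) ^ 2)) := by
      intro k hk
      set A : ℝ := 1 + k ^ 2 with hAdef
      have hApos : (0 : ℝ) < A := by positivity
      have hA1 : (1 : ℝ) ≤ A := by nlinarith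
      have hkpos : (0 : ℝ) < k := by linarith
      have h1 : A ^ (-(1 : ℝ) / 2) ≤ A ^ (s - 3) :=
        Real.rpow_le_rpow_of_exponent_le hA1 (by linarith)
      have h2 : (4 * k ^ 2 : ℝ) ^ (-(1 : ℝ) / 2) ≤ A ^ (-(1 : ℝ) / 2) :=
        Real.rpow_le_rpow_of_nonpos hApos (by nlinarith) (by norm_num)
      have h3 : (4 * k ^ 2 : ℝ) ^ (-(1 : ℝ) / 2) = (2 * k)⁻¹ := by
        rw [show (4 * k ^ 2 : ℝ) = (2 * k) ^ (2 : ℕ) by ring,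
          ← Real.rpow_natCast (2 * k) 2, ← Real.rpow_mul (by linarith)]
        norm_num [Real.rpow_neg_one]
      have hfge : A ^ (s - 3) / 8 ≤ A ^ s / ((k ^ 3 + k ^ 2) ^ 2 + (2 * k ^ 2 + 2) ^ 2) := by
        rw [div_le_div_iff₀ (by norm_num) (denomPos k)]
        have hm : A ^ (s - 3) * ((k ^ 3 + k ^ 2) ^ 2 + (2 * k ^ 2 + 2) ^ 2)
            ≤ A ^ (s - 3) * (8 * (1 + k ^ 2) ^ 3) :=
          mul_le_mul_of_nonneg_left (denomUB k) (Real.rpow_nonneg hApos.le _)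
        have hEq : A ^ (s - 3) * (8 * (1 + k ^ 2) ^ 3) = A ^ s * 8 := by
          rw [keyEq k s]; ring
        linarith
      have hk1 : k ^ (-1 : ℝ) = 2 * (2 * k)⁻¹ := by
        rw [Real.rpow_neg_one]
        field_simp
      rw [hk1]
      nlinarith [hfge, h1, h2, h3]
    have hgInt : IntegrableOn (fun k : ℝ => k ^ (-1 : ℝ)) (Ioi 1) := by
      refine h16.mono' (by fun_prop) ?_
      rw [ae_restrict_iff' measurableSet_Ioi]
      filter_upwards with k hk
      have hkpos : (0 : ℝ) < k := lt_trans one_pos hk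
      have hb := hbound k hk
      have hfnn : 0 ≤ (1 + k ^ 2) ^ s / ((k ^ 3 + k ^ 2) ^ 2 + (2 * k ^ 2 + 2) ^ 2) := by
        apply div_nonneg (Real.rpow_nonneg (by positivity) _) (denomPos k).le
      rw [Real.norm_eq_abs, abs_of_nonneg (Real.rpow_nonneg hkpos.le _)]
      exact hb
    rw [integrableOn_Ioi_rpow_iff zero_lt_one] at hgInt
    norm_num at hgInt
  · intro hs
    have hdom : Integrable (fun k : ℝ => ((1 : ℝ) + ‖k‖ ^ 2) ^ (-(6 - 2 * s) / 2)) :=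
      integrable_rpow_neg_one_add_norm_sq (by
        norm_num [Module.finrank_self]; linarith)
    have hdom' : Integrable (fun k : ℝ => 2 * ((1 : ℝ) + k ^ 2) ^ (s - 3)) := by
      have := hdom.const_mul 2
      apply this.congr
      filter_upwards with k
      rw [Real.norm_eq_abs, sq_abs, show -(6 - 2 * s) / 2 = s - 3 by ring]
    refine hdom'.mono' ?_ ?_
    · apply Continuous.aestronglyMeasurable
      apply Continuous.div
      · exact (continuous_const.add (continuous_pow 2)).rpow_const
          (fun x => Or.inl (by exact (show (0:ℝ) < 1 + x ^ 2 by positivity).ne'))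
      · continuity
      · exact fun x => (denomPos x).ne'
    · filter_upwards with k
      set A : ℝ := 1 + k ^ 2 with hAdef
      have hApos : (0 : ℝ) < A := by positivity
      have hfnn : 0 ≤ A ^ s / ((k ^ 3 + k ^ 2) ^ 2 + (2 * k ^ 2 + 2) ^ 2) :=
        div_nonneg (Real.rpow_nonneg hApos.le _) (denomPos k).le
      rw [Real.norm_eq_abs, abs_of_nonneg hfnn, div_le_iff₀ (denomPos k)]
      have hm : 2 * A ^ (s - 3) * ((1 / 2 : ℝ) * (1 + k ^ 2) ^ 3)
          ≤ 2 * A ^ (s - 3) * ((k ^ 3 + k ^ 2) ^ 2 + (2 * k ^ 2 + 2) ^ 2) :=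
        mul_le_mul_of_nonneg_left (denomLB k)
          (by positivity)
      have hEq : 2 * A ^ (s - 3) * ((1 / 2 : ℝ) * (1 + k ^ 2) ^ 3) = A ^ s := by
        rw [keyEq k s]; ring
      linarith

theorem stmt16 (Θhat : ℝ → ℂ)
    (hΘ : ∀ k : ℝ, ‖Θhat k‖ ^ 2 = (2 * Real.pi)⁻¹ / ((k ^ 3 + k ^ 2) ^ 2 + (2 * k ^ 2 + 2) ^ 2)) :
    (∀ s : ℝ,
        Integrable (fun k : ℝ =>
          (1 + k ^ 2) ^ s / ((k ^ 3 + k ^ 2) ^ 2 + (2 * k ^ 2 + 2) ^ 2)) ↔ s < 5 / 2) ∧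
    (∀ s : ℝ, Integrable (fun k : ℝ => (1 + k ^ 2) ^ s * ‖Θhat k‖ ^ 2) ↔ s < 5 / 2) ∧
    (∀ ε : ℝ, 0 ≤ ε → ε < 1 →
        Integrable (fun k : ℝ => (1 + k ^ 2) ^ (3 / 2 + ε : ℝ) * ‖Θhat k‖ ^ 2)) := by
  have part2 : ∀ s : ℝ,
      Integrable (fun k : ℝ => (1 + k ^ 2) ^ s * ‖Θhat k‖ ^ 2) ↔ s < 5 / 2 := by
    intro s
    have heq : (fun k : ℝ => (1 + k ^ 2) ^ s * ‖Θhat k‖ ^ 2)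
        = fun k : ℝ => (2 * Real.pi)⁻¹ *
          ((1 + k ^ 2) ^ s / ((k ^ 3 + k ^ 2) ^ 2 + (2 * k ^ 2 + 2) ^ 2)) := by
      funext k
      rw [hΘ k]
      ring
    rw [heq, integrable_const_mul_iff
      (isUnit_iff_ne_zero.2 (by positivity : ((2 * Real.pi)⁻¹ : ℝ) ≠ 0))]
    exact main_iff s
  refine ⟨main_iff, part2, fun ε h0 h1 => ?_⟩
  exact (part2 (3 / 2 + ε)).2 (by linarith)
end
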